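/- For a vector x ∈ ℝ^n and matrix A ∈ ℝ^{n×n}, the directional derivative of the i-th Kronecker power along the linear vector field Ax satisfies (∂x^{(i)}/∂x) A x = (Σ_{k=0}^{i-1} Iₙ^{(k)} ⊗ A ⊗ Iₙ^{(i-k-1)}) x^{(i)}. -/

import Mathlib

open Matrix Finset

/-- Kronecker product of `Fin`-indexed real matrices, with flattened index types. -/
def kron {m n p q : ℕ} (A : Matrix (Fin m) (Fin n) ℝ) (B : Matrix (Fin p) (Fin q) ℝ) :
    Matrix (Fin (m * p)) (Fin (n * q)) ℝ :=
  Matrix.reindex finProdFinEquiv finProdFinEquiv (A.kroneckerMap (· * ·) B)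

/-- Cast a matrix along equalities of its `Fin` dimensions. -/
def mcast {m n m' n' : ℕ} (hm : m = m') (hn : n = n') (A : Matrix (Fin m) (Fin n) ℝ) :
    Matrix (Fin m') (Fin n') ℝ :=
  Matrix.reindex (finCongr hm) (finCongr hn) A

/-- `k`-th Kronecker power of a matrix, `M^{(0)} = 1` and `M^{(k+1)} = M^{(k)} ⊗ M`. -/
def kronPow {m n : ℕ} : (k : ℕ) → Matrix (Fin m) (Fin n) ℝ → Matrix (Fin (m ^ k)) (Fin (n ^ k)) ℝ
  | 0, _ => mcast rfl rfl (1 : Matrix (Fin 1) (Fin 1) ℝ)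
  | k + 1, A => mcast (pow_succ m k).symm (pow_succ n k).symm (kron (kronPow k A) A)

/-- A vector as a column matrix. -/
def cvec {n : ℕ} (x : Fin n → ℝ) : Matrix (Fin n) (Fin 1) ℝ := Matrix.of fun i _ => x i

lemma dim_row {n i k : ℕ} (h : k < i) : n ^ k * (n * n ^ (i - k - 1)) = n ^ i := by
  have h1 : k + (1 + (i - k - 1)) = i := by omega
  calc n ^ k * (n * n ^ (i - k - 1)) = n ^ k * (n ^ 1 * n ^ (i - k - 1)) := by rw [pow_one]
    _ = n ^ (k + (1 + (i - k - 1))) := by rw [← pow_add, ← pow_add]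
    _ = n ^ i := by rw [h1]

lemma dim_one {n i k : ℕ} : (1:ℕ) ^ k * (n * 1 ^ (i - k - 1)) = n := by simp

/-- The claimed Jacobian matrix `Σ_{k=0}^{i-1} x^{(k)} ⊗ Iₙ ⊗ x^{(i-k-1)}` of `x ↦ x^{(i)}`. -/
def kronJac {n : ℕ} (i : ℕ) (x : Fin n → ℝ) : Matrix (Fin (n ^ i)) (Fin n) ℝ :=
  ∑ k : Fin i, mcast (dim_row k.isLt) dim_one
    (kron (kronPow k (cvec x)) (kron (1 : Matrix (Fin n) (Fin n) ℝ) (kronPow (i - k - 1) (cvec x))))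

/-- `x^{(i)}` as a plain vector in `ℝ^{nⁱ}`. -/
def kronPowVec {n : ℕ} (i : ℕ) (x : Fin n → ℝ) : Fin (n ^ i) → ℝ :=
  fun j => kronPow i (cvec x) j (finCongr (one_pow i).symm 0)

lemma mcast_apply {m n m' n' : ℕ} (hm : m = m') (hn : n = n') (A : Matrix (Fin m) (Fin n) ℝ)
    (i : Fin m') (j : Fin n') :
    mcast hm hn A i j = A ⟨i.val, hm ▸ i.isLt⟩ ⟨j.val, hn ▸ j.isLt⟩ := rfl

lemma kron_apply {m n p q : ℕ} (A : Matrix (Fin m) (Fin n) ℝ) (B : Matrix (Fin p) (Fin q) ℝ)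
    (r : Fin (m * p)) (c : Fin (n * q)) :
    kron A B r c = A r.divNat c.divNat * B r.modNat c.modNat := rfl

lemma divNat_val {m p : ℕ} (r : Fin (m * p)) : (r.divNat).val = r.val / p := rfl
lemma modNat_val {m p : ℕ} (r : Fin (m * p)) : (r.modNat).val = r.val % p := rfl

lemma kronPow_one_apply {n : ℕ} (k : ℕ) (a b : Fin (n ^ k)) :
    kronPow k (1 : Matrix (Fin n) (Fin n) ℝ) a b = if a = b then 1 else 0 := by
  induction k with
  | zero =>
    have h1 : n ^ 0 = 1 := pow_zero n
    have : a = b := Fin.ext (by omega)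
    rw [this, if_pos rfl]
    simp [kronPow, mcast_apply, Matrix.one_apply]
    exact Matrix.one_apply_eq _
  | succ k ih =>
    rw [kronPow, mcast_apply, kron_apply, ih, Matrix.one_apply]
    simp only [Fin.ext_iff, divNat_val, modNat_val]
    by_cases h1 : a.val / n = b.val / n <;> by_cases h2 : a.val % n = b.val % n
    · have hv : a.val = b.val := by
        rw [← Nat.div_add_mod a.val n, h1, h2, Nat.div_add_mod]
      simp [h1, h2, hv]
    · have hv : ¬ a.val = b.val := fun h => h2 (by rw [h])
      simp [h1, h2, hv]
    · have hv : ¬ a.val = b.val := fun h => h1 (by rw [h])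
      simp [h1, h2, hv]
    · have hv : ¬ a.val = b.val := fun h => h1 (by rw [h])
      simp [h1, h2, hv]

lemma fin_one_pow_eq {i : ℕ} (u v : Fin (1 ^ i)) : u = v := by
  have h : (1:ℕ) ^ i = 1 := one_pow i
  have hu := u.isLt; have hv := v.isLt; exact Fin.ext (by omega)

lemma npos {n i : ℕ} (j : Fin (n ^ (i+1))) : 0 < n := by
  rcases Nat.eq_zero_or_pos n with h | h
  · exfalso
    have hj := j.isLt
    have h0 : n ^ (i+1) = 0 := by rw [h]; exact zero_pow (Nat.succ_ne_zero i)
    omega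
  · exact h

lemma div_lt_pow {n i : ℕ} (j : Fin (n ^ (i+1))) : j.val / n < n ^ i :=
  Nat.div_lt_of_lt_mul (by rw [mul_comm, ← pow_succ]; exact j.isLt)

lemma kronPowVec_succ {n : ℕ} (i : ℕ) (x : Fin n → ℝ) (j : Fin (n ^ (i+1))) :
    kronPowVec (i+1) x j
      = kronPowVec i x ⟨j.val / n, div_lt_pow j⟩ * x ⟨j.val % n, Nat.mod_lt _ (npos j)⟩ := by
  unfold kronPowVec
  rw [kronPow, mcast_apply, kron_apply]
  congr 1
  · exact congrArg₂ (kronPow i (cvec x)) (Fin.ext rfl) (fin_one_pow_eq _ _)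

def dg {n : ℕ} (hn : 0 < n) (j t : ℕ) : Fin n := ⟨j / n ^ t % n, Nat.mod_lt _ hn⟩

lemma kronPowVec_prod {n : ℕ} (hn : 0 < n) (i : ℕ) (x : Fin n → ℝ) (j : Fin (n ^ i)) :
    kronPowVec i x j = ∏ t ∈ range i, x (dg hn j.val t) := by
  induction i with
  | zero =>
    unfold kronPowVec kronPow
    simp [mcast_apply, Matrix.one_apply, Fin.ext_iff]
    exact (congrArg (fun z => (1 : Matrix (Fin 1) (Fin 1) ℝ) z 0) (Subsingleton.elim _ _)).trans
      (Matrix.one_apply_eq (0 : Fin 1))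
  | succ i ih =>
    rw [kronPowVec_succ, ih, Finset.prod_range_succ']
    congr 1
    · exact Finset.prod_congr rfl fun t _ => congrArg x (Fin.ext (by
        simp only [dg]
        rw [Nat.div_div_eq_div_mul, ← pow_succ']))
    · exact congrArg x (Fin.ext (by simp [dg]))

lemma digit_mix {n : ℕ} (hn : 0 < n) (m t j u : ℕ) (hu : u < n) :
    (j % n ^ m + n ^ m * u + n * n ^ m * (j / (n * n ^ m))) / n ^ t % n
      = if t = m then u else j / n ^ t % n := by
  have hq : 0 < n ^ m := pow_pos hn m
  set q := n ^ m with hqdef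
  set c := j % q + q * u + n * q * (j / (n * q)) with hc
  rcases lt_trichotomy t m with h | rfl | h
  · rw [if_neg (by omega)]
    have hd : n ^ (t + 1) ∣ q := hqdef ▸ pow_dvd_pow n (by omega)
    have h0 : c % q = j % q := by
      have : c = j % q + q * (u + n * (j / (n * q))) := by rw [hc]; ring
      rw [this, Nat.add_mul_mod_self_left, Nat.mod_mod_of_dvd _ dvd_rfl]
    have h1 : c % n ^ (t + 1) = j % n ^ (t + 1) := by
      rw [← Nat.mod_mod_of_dvd c hd, h0, Nat.mod_mod_of_dvd j hd]
    calc c / n ^ t % n = c % (n ^ t * n) / n ^ t := (Nat.mod_mul_right_div_self c (n ^ t) n).symm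
      _ = c % n ^ (t + 1) / n ^ t := by rw [← pow_succ]
      _ = j % n ^ (t + 1) / n ^ t := by rw [h1]
      _ = j / n ^ t % n := by rw [pow_succ, Nat.mod_mul_right_div_self]
  · rw [if_pos rfl]
    have h2 : c / q = u + n * (j / (n * q)) := by
      have he : c = j % q + q * (u + n * (j / (n * q))) := by rw [hc]; ring
      rw [he, Nat.add_mul_div_left _ _ hq, Nat.div_eq_of_lt (Nat.mod_lt _ hq), zero_add]
    rw [h2, Nat.add_mul_mod_self_left, Nat.mod_eq_of_lt hu]
  · rw [if_neg (by omega)]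
    have hlt : j % q + q * u < n * q := by
      calc j % q + q * u < q + q * u := by have := Nat.mod_lt j hq; omega
        _ = q * (u + 1) := by ring
        _ ≤ q * n := Nat.mul_le_mul_left _ (Nat.succ_le_of_lt hu)
        _ = n * q := mul_comm _ _
    have h3 : c / (n * q) = j / (n * q) := by
      rw [hc, Nat.add_mul_div_left _ _ (by positivity : 0 < n * q), Nat.div_eq_of_lt hlt,
        zero_add]
    have ht' : n ^ t = n * q * n ^ (t - m - 1) := by
      rw [hqdef, ← pow_succ', ← pow_add]
      congr 1
      omega
    rw [ht', ← Nat.div_div_eq_div_mul c (n * q), ← Nat.div_div_eq_div_mul j (n * q), h3]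

def ee' (a b c : ℕ) : Fin a × (Fin b × Fin c) ≃ Fin (a * (b * c)) :=
  ((Equiv.refl (Fin a)).prodCongr finProdFinEquiv).trans finProdFinEquiv

lemma ee'_val (a b c : ℕ) (z : Fin a × (Fin b × Fin c)) :
    ((ee' a b c) z).val = z.2.2.val + c * z.2.1.val + b * c * z.1.val := by
  show (z.2.2.val + c * z.2.1.val) + (b * c) * z.1.val = _
  ring

lemma key_term {n i : ℕ} (hn : 0 < n) (x : Fin n → ℝ) (A : Matrix (Fin n) (Fin n) ℝ)
    (k : Fin i) (j : Fin (n ^ i)) :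
    (mcast (dim_row k.isLt) (dim_row k.isLt)
        (kron (kronPow (k : ℕ) (1 : Matrix (Fin n) (Fin n) ℝ))
          (kron A (kronPow (i - (k : ℕ) - 1) (1 : Matrix (Fin n) (Fin n) ℝ))))).mulVec
        (kronPowVec i x) j
      = (∏ s ∈ (range i).erase (i - (k : ℕ) - 1), x (dg hn j.val s))
          * (A.mulVec x) (dg hn j.val (i - (k : ℕ) - 1)) := by
  classical
  have hki : (k : ℕ) < i := k.isLt
  set K := (k : ℕ) with hK
  set m := i - K - 1 with hm
  set q := n ^ m with hqdef
  have hq : 0 < q := pow_pos hn m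
  have hmi : m < i := by omega
  set p := n * q with hp
  have hp0 : 0 < p := by rw [hp]; positivity
  have hri : n ^ K * (n * q) = n ^ i := dim_row hki
  set v := kronPowVec i x with hv
  set M := mcast (dim_row k.isLt) (dim_row k.isLt)
      (kron (kronPow K (1 : Matrix (Fin n) (Fin n) ℝ))
        (kron A (kronPow m (1 : Matrix (Fin n) (Fin n) ℝ)))) with hMd
  -- the equivalence
  set ee : Fin (n ^ K) × (Fin n × Fin q) ≃ Fin (n ^ i) :=
    (ee' (n ^ K) n q).trans (finCongr hri) with heed
  have hjp : j.val / p < n ^ K := by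
    apply Nat.div_lt_of_lt_mul
    rw [mul_comm, hri]
    exact j.isLt
  set da : Fin (n ^ K) := ⟨j.val / p, hjp⟩ with hda
  set dm : Fin n := dg hn j.val m with hdm
  set db : Fin q := ⟨j.val % q, Nat.mod_lt _ hq⟩ with hdb
  -- entry formula
  have hM : ∀ r c : Fin (n ^ i), M r c =
      (if (Fin.cast hri.symm r).divNat = (Fin.cast hri.symm c).divNat then (1:ℝ) else 0)
        * (A ((Fin.cast hri.symm r).modNat.divNat) ((Fin.cast hri.symm c).modNat.divNat)
          * if (Fin.cast hri.symm r).modNat.modNat = (Fin.cast hri.symm c).modNat.modNat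
              then (1:ℝ) else 0) := by
    intro r c
    rw [hMd, mcast_apply, kron_apply, kron_apply, kronPow_one_apply, kronPow_one_apply]
    rfl
  -- sum over the product decomposition
  have hs : ∀ f : Fin (n ^ i) → ℝ,
      ∑ c, f c = ∑ u : Fin n, ∑ b : Fin q, ∑ a : Fin (n ^ K), f (ee (a, (u, b))) := by
    intro f
    rw [← Equiv.sum_comp ee f, Fintype.sum_prod_type, Finset.sum_comm, Fintype.sum_prod_type]
  have hval : ∀ (a : Fin (n ^ K)) (u : Fin n) (b : Fin q),
      (ee (a, (u, b))).val = b.val + q * u.val + n * q * a.val := by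
    intro a u b
    exact ee'_val (n ^ K) n q (a, (u, b))
  have hbu : ∀ (u : Fin n) (b : Fin q), b.val + q * u.val < p := by
    intro u b
    calc b.val + q * u.val < q + q * u.val := by have := b.isLt; omega
      _ = q * (u.val + 1) := by ring
      _ ≤ q * n := Nat.mul_le_mul_left _ (Nat.succ_le_of_lt u.isLt)
      _ = p := (mul_comm q n).trans hp.symm
  -- index identities
  have g4 : (Fin.cast hri.symm j).divNat = da := Fin.ext rfl
  have g5 : (Fin.cast hri.symm j).modNat.divNat = dm := by
    apply Fin.ext
    show j.val % (n * q) / q = j.val / q % n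
    rw [mul_comm n q, Nat.mod_mul_right_div_self]
  have g6 : (Fin.cast hri.symm j).modNat.modNat = db := by
    apply Fin.ext
    show j.val % (n * q) % q = j.val % q
    exact Nat.mod_mod_of_dvd _ (dvd_mul_left q n)
  have g1 : ∀ (a : Fin (n ^ K)) (u : Fin n) (b : Fin q),
      (Fin.cast hri.symm (ee (a, (u, b)))).divNat = a := by
    intro a u b
    apply Fin.ext
    show (ee (a, (u, b))).val / (n * q) = a.val
    rw [hval, Nat.add_mul_div_left _ _ (by positivity : 0 < n * q),
      Nat.div_eq_of_lt (hbu u b), zero_add]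
  have g2 : ∀ (a : Fin (n ^ K)) (u : Fin n) (b : Fin q),
      (Fin.cast hri.symm (ee (a, (u, b)))).modNat.divNat = u := by
    intro a u b
    apply Fin.ext
    show (ee (a, (u, b))).val % (n * q) / q = u.val
    rw [hval, Nat.add_mul_mod_self_left, Nat.mod_eq_of_lt (hbu u b),
      Nat.add_mul_div_left _ _ hq, Nat.div_eq_of_lt b.isLt, zero_add]
  have g3 : ∀ (a : Fin (n ^ K)) (u : Fin n) (b : Fin q),
      (Fin.cast hri.symm (ee (a, (u, b)))).modNat.modNat = b := by
    intro a u b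
    apply Fin.ext
    show (ee (a, (u, b))).val % (n * q) % q = b.val
    rw [hval, Nat.add_mul_mod_self_left, Nat.mod_eq_of_lt (hbu u b),
      Nat.add_mul_mod_self_left, Nat.mod_eq_of_lt b.isLt]
  -- collapse the deltas
  have h1 : ∀ (u : Fin n) (b : Fin q) (a : Fin (n ^ K)),
      M j (ee (a, (u, b))) * v (ee (a, (u, b)))
        = if da = a then (if db = b then A dm u * v (ee (a, (u, b))) else 0) else 0 := by
    intro u b a
    rw [hM, g1, g2, g3, g4, g5, g6]
    by_cases h' : da = a <;> by_cases h'' : db = b <;> simp [h', h''] <;> ring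
  -- digits of the recombined index
  have hc0 : ∀ u : Fin n, (ee (da, (u, db))).val
      = j.val % n ^ m + n ^ m * u.val + n * n ^ m * (j.val / (n * n ^ m)) := by
    intro u
    rw [hval]
  have hdig : ∀ (u : Fin n) (t : ℕ),
      (ee (da, (u, db))).val / n ^ t % n = if t = m then u.val else j.val / n ^ t % n := by
    intro u t
    rw [hc0]
    exact digit_mix hn m t j.val u.val u.isLt
  have hvv : ∀ u : Fin n,
      v (ee (da, (u, db))) = x u * ∏ s ∈ (range i).erase m, x (dg hn j.val s) := by
    intro u
    rw [hv, kronPowVec_prod hn]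
    rw [← Finset.mul_prod_erase (range i)
      (fun t => x (dg hn (ee (da, (u, db))).val t)) (Finset.mem_range.mpr hmi)]
    congr 1
    · refine congrArg x (Fin.ext ?_)
      show (ee (da, (u, db))).val / n ^ m % n = u.val
      rw [hdig u m, if_pos rfl]
    · refine Finset.prod_congr rfl fun t hts => congrArg x (Fin.ext ?_)
      show (ee (da, (u, db))).val / n ^ t % n = j.val / n ^ t % n
      rw [hdig u t, if_neg (Finset.ne_of_mem_erase hts)]
  -- put everything together
  show ∑ c, M j c * v c = _
  rw [hs fun c => M j c * v c]
  calc ∑ u : Fin n, ∑ b : Fin q, ∑ a : Fin (n ^ K), M j (ee (a, (u, b))) * v (ee (a, (u, b)))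
      = ∑ u : Fin n, ∑ b : Fin q, ∑ a : Fin (n ^ K),
          (if da = a then (if db = b then A dm u * v (ee (a, (u, b))) else 0) else 0) := by
        refine Finset.sum_congr rfl fun u _ => Finset.sum_congr rfl fun b _ =>
          Finset.sum_congr rfl fun a _ => h1 u b a
    _ = ∑ u : Fin n, A dm u * v (ee (da, (u, db))) := by
        refine Finset.sum_congr rfl fun u _ => ?_
        simp [Finset.sum_ite_eq]
    _ = ∑ u : Fin n, (A dm u * x u) * ∏ s ∈ (range i).erase m, x (dg hn j.val s) := by
        refine Finset.sum_congr rfl fun u _ => ?_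
        rw [hvv u]
        ring
    _ = (∑ u : Fin n, A dm u * x u) * ∏ s ∈ (range i).erase m, x (dg hn j.val s) := by
        rw [Finset.sum_mul]
    _ = (∏ s ∈ (range i).erase m, x (dg hn j.val s)) * (A.mulVec x) dm := by
        rw [mul_comm]
        rfl

lemma hasFDerivAt_kronPowVec {n : ℕ} (hn : 0 < n) (i : ℕ) (x : Fin n → ℝ) :
    HasFDerivAt (fun y => kronPowVec i y)
      (ContinuousLinearMap.pi fun j : Fin (n ^ i) =>
        ∑ t ∈ range i, (∏ s ∈ (range i).erase t, x (dg hn j.val s)) •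
          ContinuousLinearMap.proj (R := ℝ) (φ := fun _ : Fin n => ℝ) (dg hn j.val t)) x := by
  refine hasFDerivAt_pi.mpr fun j => ?_
  have he : (fun y : Fin n → ℝ => kronPowVec i y j)
      = fun y => ∏ t ∈ range i, y (dg hn j.val t) :=
    funext fun y => kronPowVec_prod hn i y j
  rw [he]
  exact HasFDerivAt.finset_prod fun t _ => hasFDerivAt_apply (dg hn j.val t) x


/-- The directional derivative of `x ↦ x^{(i)}` along the linear vector field `Ax`
equals `(Σ_{k=0}^{i-1} Iₙ^{(k)} ⊗ A ⊗ Iₙ^{(i-k-1)}) x^{(i)}`. -/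
theorem fderiv_kronPow_apply_Ax {n : ℕ} (i : ℕ) (x : Fin n → ℝ)
    (A : Matrix (Fin n) (Fin n) ℝ) :
    fderiv ℝ (kronPowVec i) x (A.mulVec x)
    = (∑ k : Fin i, mcast (dim_row k.isLt) (dim_row k.isLt)
        (kron (kronPow k (1 : Matrix (Fin n) (Fin n) ℝ))
          (kron A (kronPow (i - k - 1) (1 : Matrix (Fin n) (Fin n) ℝ))))).mulVec
        (kronPowVec i x) := by
  rcases Nat.eq_zero_or_pos n with hn | hn
  · subst hn
    funext j
    cases i with
    | zero =>
      have h1 : kronPowVec (n := 0) 0 = fun _ : Fin 0 → ℝ => kronPowVec 0 x :=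
        funext fun y => congrArg _ (Subsingleton.elim y x)
      rw [h1, fderiv_const_apply]
      simp [Matrix.mulVec, dotProduct, ContinuousLinearMap.zero_apply]
    | succ i' =>
      exact absurd j.isLt (by simp)
  · rw [(hasFDerivAt_kronPowVec hn i x).fderiv]
    funext j
    rw [ContinuousLinearMap.pi_apply, ContinuousLinearMap.sum_apply]
    simp only [ContinuousLinearMap.smul_apply, ContinuousLinearMap.proj_apply, smul_eq_mul]
    have hR : (∑ k : Fin i, mcast (dim_row k.isLt) (dim_row k.isLt)
        (kron (kronPow (k : ℕ) (1 : Matrix (Fin n) (Fin n) ℝ))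
          (kron A (kronPow (i - (k : ℕ) - 1) (1 : Matrix (Fin n) (Fin n) ℝ))))).mulVec
        (kronPowVec i x) j
        = ∑ k : Fin i, (mcast (dim_row k.isLt) (dim_row k.isLt)
        (kron (kronPow (k : ℕ) (1 : Matrix (Fin n) (Fin n) ℝ))
          (kron A (kronPow (i - (k : ℕ) - 1) (1 : Matrix (Fin n) (Fin n) ℝ))))).mulVec
        (kronPowVec i x) j := by
      simp only [Matrix.mulVec, dotProduct, Matrix.sum_apply, Finset.sum_mul]
      rw [Finset.sum_comm]
    rw [hR]
    have hK : ∀ k : Fin i, (mcast (dim_row k.isLt) (dim_row k.isLt)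
        (kron (kronPow (k : ℕ) (1 : Matrix (Fin n) (Fin n) ℝ))
          (kron A (kronPow (i - (k : ℕ) - 1) (1 : Matrix (Fin n) (Fin n) ℝ))))).mulVec
        (kronPowVec i x) j
        = (∏ s ∈ (range i).erase (i - 1 - (k : ℕ)), x (dg hn j.val s))
          * (A.mulVec x) (dg hn j.val (i - 1 - (k : ℕ))) := by
      intro k
      rw [key_term hn x A k j, show i - (k : ℕ) - 1 = i - 1 - (k : ℕ) from by omega]
    rw [Finset.sum_congr rfl fun k _ => hK k,
      Fin.sum_univ_eq_sum_range (fun K => (∏ s ∈ (range i).erase (i - 1 - K), x (dg hn j.val s))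
        * (A.mulVec x) (dg hn j.val (i - 1 - K))) i,
      Finset.sum_range_reflect (fun t => (∏ s ∈ (range i).erase t, x (dg hn j.val s))
        * (A.mulVec x) (dg hn j.val t)) i]
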